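/- arXiv:2505.12139 — 7 statements merged into one kernel-verified Lean document; each statement's English description precedes it below -/
import Mathlib

section
/- A k-subspace W ⊂ N ⊗_{F_p} k satisfies φ(W) = W if and only if there exists an F_p-subspace T ⊂ N such that W = T ⊗_{F_p} k (viewed inside N ⊗_{F_p} k). -/
/-! If `φ W = W`, put `T = {v | 1 ⊗ v ∈ W}`, so that `T ⊗ k ⊆ W`. In the basis `1 ⊗ eᵢ`
the map `φ` raises coordinates to the `p`-th power, so its fixed vectors are the `1 ⊗ v`
with `v ∈ N`, and if `w ∈ W` has some coordinate equal to `1` then `φ w - w ∈ W` has smaller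
support. By induction on the support, `φ w - w ∈ T ⊗ k`. As `x ↦ x ^ p - x` is surjective
on the algebraically closed field `k`, there is `z ∈ T ⊗ k` with `φ z - z = w - φ w`;
then `w + z` is fixed by `φ`, hence equals `1 ⊗ v` with `v ∈ T`, and `w ∈ T ⊗ k`. -/

open Module Submodule Function

/-- On a perfect field the Frobenius is surjective, so images of submodules under
Frobenius-semilinear maps are again submodules. -/
instance frobSurj (k : Type*) [Field k] (p : ℕ) [Fact p.Prime] [CharP k p] [PerfectRing k p] :
    RingHomSurjective (frobenius k p) := ⟨surjective_frobenius k p⟩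

open TensorProduct

open Polynomial in
theorem IsAlgClosed.exists_pow_sub_self_eq {k : Type*} [Field k] [IsAlgClosed k] {n : ℕ}
    (hn : 1 < n) (c : k) : ∃ x : k, x ^ n - x = c := by
  have hdeg : (X ^ n - X - C c : k[X]).natDegree = n := by
    rw [natDegree_sub_C, FiniteField.X_pow_card_sub_X_natDegree_eq k hn]
  obtain ⟨x, hx⟩ := IsAlgClosed.exists_root (X ^ n - X - C c : k[X])
    (natDegree_pos_iff_degree_pos.mp (by omega)).ne'
  exact ⟨x, by simpa [sub_eq_zero] using hx⟩

theorem exists_algebraMap_eq_of_pow_eq_self {p : ℕ} [Fact p.Prime] {k : Type*} [Field k]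
    [CharP k p] [Algebra (ZMod p) k] {x : k} (hx : x ^ p = x) :
    ∃ n : ZMod p, algebraMap (ZMod p) k n = x := by
  rw [← Subfield.mem_bot_iff_pow_eq_self k p, ← ZMod.fieldRange_castHom_eq_bot p] at hx
  obtain ⟨n, rfl⟩ := hx
  exact ⟨n, by rw [Subsingleton.elim (algebraMap (ZMod p) k) (ZMod.castHom dvd_rfl k)]⟩

namespace Submodule

variable {R A M : Type*} [CommSemiring R] [Semiring A] [Algebra R A] [AddCommMonoid M] [Module R M]

def comapOneTmul (W : Submodule A (A ⊗[R] M)) : Submodule R M :=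
  (W.restrictScalars R).comap (TensorProduct.mk R A M 1)

theorem baseChange_comapOneTmul_le (W : Submodule A (A ⊗[R] M)) :
    (comapOneTmul W).baseChange A ≤ W := by
  rw [baseChange_eq_span, span_le]
  rintro _ ⟨v, hv, rfl⟩
  exact hv

end Submodule

section FrobeniusDescent

variable {p : ℕ} [Fact p.Prime] {k : Type*} [Field k] [CharP k p] [Algebra (ZMod p) k]
  {N : Type*} [AddCommGroup N] [Module (ZMod p) N]
  {φ : (k ⊗[ZMod p] N) →ₛₗ[frobenius k p] (k ⊗[ZMod p] N)}

theorem repr_map_apply_eq_pow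
    (hφ : ∀ (c : k) (v : N), φ (c ⊗ₜ[ZMod p] v) = (c ^ p) ⊗ₜ[ZMod p] v)
    {ι : Type*} (e : Basis ι (ZMod p) N) (x : k ⊗[ZMod p] N) (i : ι) :
    (Algebra.TensorProduct.basis k e).repr (φ x) i =
      (Algebra.TensorProduct.basis k e).repr x i ^ p := by
  induction x using TensorProduct.induction_on with
  | zero => simp [zero_pow (Fact.out : p.Prime).ne_zero]
  | tmul c v => simp [hφ, mul_pow, ← map_pow, ZMod.pow_card]
  | add x y hx hy => simp [hx, hy, add_pow_char]

theorem exists_one_tmul_eq_of_map_eq_self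
    (hφ : ∀ (c : k) (v : N), φ (c ⊗ₜ[ZMod p] v) = (c ^ p) ⊗ₜ[ZMod p] v)
    {x : k ⊗[ZMod p] N} (hx : φ x = x) : ∃ v : N, 1 ⊗ₜ v = x := by
  let e := Free.chooseBasis (ZMod p) N
  let b := Algebra.TensorProduct.basis k e
  have hcoeff (i) : ∃ n : ZMod p, algebraMap (ZMod p) k n = b.repr x i :=
    exists_algebraMap_eq_of_pow_eq_self (by rw [← repr_map_apply_eq_pow hφ, hx])
  choose n hn using hcoeff
  refine ⟨∑ i ∈ (b.repr x).support, n i • e i, ?_⟩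
  conv_rhs => rw [← b.linearCombination_repr x]
  simp [Finsupp.linearCombination_apply, Finsupp.sum, tmul_sum, b, ← hn, algebraMap_smul]

theorem exists_map_sub_self_eq [IsAlgClosed k]
    (hφ : ∀ (c : k) (v : N), φ (c ⊗ₜ[ZMod p] v) = (c ^ p) ⊗ₜ[ZMod p] v)
    (T : Submodule (ZMod p) N) {u : k ⊗[ZMod p] N} (hu : u ∈ T.baseChange k) :
    ∃ z ∈ T.baseChange k, φ z - z = u := by
  obtain ⟨y, rfl⟩ := hu
  induction y using TensorProduct.induction_on with
  | zero => exact ⟨0, zero_mem _, by simp⟩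
  | tmul c t =>
    obtain ⟨x, hx⟩ := IsAlgClosed.exists_pow_sub_self_eq (Fact.out : p.Prime).one_lt c
    exact ⟨x ⊗ₜ t, tmul_mem_baseChange_of_mem x t.2, by rw [hφ, ← sub_tmul, hx]; rfl⟩
  | add y y' ih ih' =>
    obtain ⟨z, hz, hzy⟩ := ih
    obtain ⟨z', hz', hzy'⟩ := ih'
    exact ⟨z + z', add_mem hz hz', by rw [map_add, map_add, ← hzy, ← hzy']; abel⟩

theorem mem_baseChange_of_map_sub_self_mem [IsAlgClosed k]
    (hφ : ∀ (c : k) (v : N), φ (c ⊗ₜ[ZMod p] v) = (c ^ p) ⊗ₜ[ZMod p] v)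
    {W : Submodule k (k ⊗[ZMod p] N)} {w : k ⊗[ZMod p] N} (hw : w ∈ W)
    (hu : φ w - w ∈ (comapOneTmul W).baseChange k) : w ∈ (comapOneTmul W).baseChange k := by
  obtain ⟨z, hz, hzw⟩ := exists_map_sub_self_eq hφ _ (neg_mem hu)
  have hfix : φ (w + z) = w + z := by
    rw [← sub_eq_zero, map_add, add_sub_add_comm, hzw, add_neg_cancel]
  obtain ⟨v, hv⟩ := exists_one_tmul_eq_of_map_eq_self hφ hfix
  have hvW : v ∈ comapOneTmul W := by
    change 1 ⊗ₜ v ∈ W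
    rw [hv]
    exact add_mem hw (baseChange_comapOneTmul_le W hz)
  have hwz := hv ▸ tmul_mem_baseChange_of_mem (1 : k) hvW
  simpa using sub_mem hwz hz

theorem card_support_repr_map_sub_self_lt
    (hφ : ∀ (c : k) (v : N), φ (c ⊗ₜ[ZMod p] v) = (c ^ p) ⊗ₜ[ZMod p] v)
    {ι : Type*} (e : Basis ι (ZMod p) N) {w : k ⊗[ZMod p] N} {i : ι}
    (hi : (Algebra.TensorProduct.basis k e).repr w i = 1) :
    ((Algebra.TensorProduct.basis k e).repr (φ w - w)).support.card <
      ((Algebra.TensorProduct.basis k e).repr w).support.card := by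
  classical
  set b := Algebra.TensorProduct.basis k e
  have hsub : (b.repr (φ w - w)).support ⊆ (b.repr w).support.erase i := by
    intro j hj
    rw [Finsupp.mem_support_iff, map_sub, Finsupp.sub_apply, repr_map_apply_eq_pow hφ,
      sub_ne_zero] at hj
    refine Finset.mem_erase.mpr ⟨?_, Finsupp.mem_support_iff.mpr ?_⟩
    · rintro rfl
      exact hj (by rw [hi, one_pow])
    · rintro h0
      exact hj (by rw [h0, zero_pow (Fact.out : p.Prime).ne_zero])
  exact (Finset.card_le_card hsub).trans_lt
    (Finset.card_erase_lt_of_mem (Finsupp.mem_support_iff.mpr (hi ▸ one_ne_zero)))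

theorem le_baseChange_comapOneTmul [IsAlgClosed k]
    (hφ : ∀ (c : k) (v : N), φ (c ⊗ₜ[ZMod p] v) = (c ^ p) ⊗ₜ[ZMod p] v)
    {W : Submodule k (k ⊗[ZMod p] N)} (hW : ∀ w ∈ W, φ w ∈ W) :
    W ≤ (comapOneTmul W).baseChange k := by
  intro w hw
  let e := Free.chooseBasis (ZMod p) N
  let b := Algebra.TensorProduct.basis k e
  induction hn : (b.repr w).support.card using Nat.strong_induction_on generalizing w with
  | _ n ih =>
    obtain rfl | hw0 := eq_or_ne w 0
    · exact zero_mem _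
    obtain ⟨i, hi⟩ : (b.repr w).support.Nonempty := by simpa using hw0
    have hc : b.repr w i ≠ 0 := Finsupp.mem_support_iff.mp hi
    set w' := (b.repr w i)⁻¹ • w
    have hw'W : w' ∈ W := W.smul_mem _ hw
    have hw'i : b.repr w' i = 1 := by
      rw [map_smul, Finsupp.smul_apply, smul_eq_mul, inv_mul_cancel₀ hc]
    have hsupp : (b.repr w').support = (b.repr w).support := by
      rw [map_smul b.repr, Finsupp.support_smul_eq (inv_ne_zero hc)]
    have hw' : w' ∈ (comapOneTmul W).baseChange k := by
      refine mem_baseChange_of_map_sub_self_mem hφ hw'W (ih _ ?_ (sub_mem (hW _ hw'W) hw'W) rfl)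
      exact hn ▸ hsupp ▸ card_support_repr_map_sub_self_lt hφ e hw'i
    simpa [w', smul_smul, mul_inv_cancel₀ hc] using smul_mem _ (b.repr w i) hw'
end FrobeniusDescent

theorem phi_stable_iff_descends_to_Fp_general
    (p : ℕ) [Fact p.Prime]
    (k : Type*) [Field k] [IsAlgClosed k] [CharP k p] [Algebra (ZMod p) k]
    (N : Type*) [AddCommGroup N] [Module (ZMod p) N]
    (φ : (k ⊗[ZMod p] N) →ₛₗ[frobenius k p] (k ⊗[ZMod p] N))
    (hφ : ∀ (c : k) (v : N), φ (c ⊗ₜ[ZMod p] v) = (c ^ p) ⊗ₜ[ZMod p] v)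
    (W : Submodule k (k ⊗[ZMod p] N)) :
    Submodule.map φ W = W ↔
      ∃ T : Submodule (ZMod p) N,
        W = Submodule.span k ((fun v : N => (1 : k) ⊗ₜ[ZMod p] v) '' (T : Set N)) := by
  constructor
  · intro h
    refine ⟨comapOneTmul W, ?_⟩
    refine (le_antisymm ?_ (baseChange_comapOneTmul_le W)).trans (baseChange_eq_span _ _)
    exact le_baseChange_comapOneTmul hφ fun w hw ↦ h ▸ mem_map_of_mem hw
  · rintro ⟨T, rfl⟩
    rw [map_span, ← Set.image_comp]
    congr 1
    exact Set.image_congr fun v _ ↦ by simp [hφ]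

/-- over an algebraically closed field `k` of characteristic `p`, with
`φ : N ⊗_{F_p} k → N ⊗_{F_p} k` the `p`-semilinear bijection `v ⊗ λ ↦ v ⊗ λ^p`,
a `k`-subspace `W` satisfies `φ(W) = W` iff `W = T ⊗_{F_p} k` for an `F_p`-subspace
`T ⊂ N`. -/
theorem phi_stable_iff_descends_to_Fp
    (p : ℕ) [Fact p.Prime]
    (k : Type*) [Field k] [IsAlgClosed k] [CharP k p] [Algebra (ZMod p) k]
    (N : Type*) [AddCommGroup N] [Module (ZMod p) N] [FiniteDimensional (ZMod p) N]
    (φ : (k ⊗[ZMod p] N) →ₛₗ[frobenius k p] (k ⊗[ZMod p] N))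
    (hφ : ∀ (c : k) (v : N), φ (c ⊗ₜ[ZMod p] v) = (c ^ p) ⊗ₜ[ZMod p] v)
    (W : Submodule k (k ⊗[ZMod p] N)) :
    Submodule.map φ W = W ↔
      ∃ T : Submodule (ZMod p) N,
        W = Submodule.span k ((fun v : N => (1 : k) ⊗ₜ[ZMod p] v) '' (T : Set N)) :=
  phi_stable_iff_descends_to_Fp_general p k N φ hφ W
end

section
/- For 0 < m < 2σ₀ the filtration U_m satisfies the recurrence relations U_{m+1} = U_m + φ(U_m) (for m > 0) and φ(U_{m-1}) = U_m ∩ φ(U_m) (for m < 2σ₀). -/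
/-! For `0 < m < 2σ₀` the subspace `U_m` is not `φ`-stable: below `σ₀` a `φ`-stable subspace of
`K` lies in every `φ^{-i}(K)`, hence in `U₀ = 0`, and above `σ₀` a `φ`-stable subspace containing
`K` contains `U = Σ φ^i(K)`, of dimension `2σ₀`. Since `U_m` and `φ(U_m)` both lie in `U_{m+1}`,
which has just one more dimension, `U_m + φ(U_m) = U_{m+1}`. As `φ` preserves dimensions, the
dimension formula then gives `dim (U_m ∩ φ(U_m)) = m - 1 = dim φ(U_{m-1})`, and
`φ(U_{m-1}) ⊆ U_m ∩ φ(U_m)`. -/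

open Module Submodule Function

variable {k : Type*} [Field k] {p : ℕ} [Fact p.Prime] [CharP k p] [PerfectRing k p]
  {V : Type*} [AddCommGroup V] [Module k V]

/-- `φ^i(K)`, the `i`-th iterated image of `K` under the `p`-semilinear map `φ`. -/
def iterMap (φ : V →ₛₗ[frobenius k p] V) (K : Submodule k V) (i : ℕ) : Submodule k V :=
  (Submodule.map φ)^[i] K

/-- `φ^{-i}(K)`, the `i`-th iterated preimage of `K` under `φ`. -/
def iterComap (φ : V →ₛₗ[frobenius k p] V) (K : Submodule k V) (i : ℕ) : Submodule k V :=
  (Submodule.comap φ)^[i] K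

/-- The smallest `φ`-stable subspace containing `K`: `U = Σ_{i ≥ 0} φ^i(K)`. -/
def bigU (φ : V →ₛₗ[frobenius k p] V) (K : Submodule k V) : Submodule k V :=
  ⨆ i : ℕ, iterMap φ K i

/-- The flag `U_m`: `U_m = φ^{-(σ₀-m)}(K) ∩ ⋯ ∩ φ^{-1}(K) ∩ K` for `m ≤ σ₀`, and
`U_m = K + φ(K) + ⋯ + φ^{m-σ₀}(K)` for `m ≥ σ₀` (so `U_{σ₀} = K`,
`U_{σ₀+1} = K + φ(K)`). -/
def flagU (σ₀ : ℕ) (φ : V →ₛₗ[frobenius k p] V) (K : Submodule k V) (m : ℕ) : Submodule k V :=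
  if m ≤ σ₀ then ⨅ i ∈ Finset.range (σ₀ - m + 1), iterComap φ K i
  else ⨆ i ∈ Finset.range (m - σ₀ + 1), iterMap φ K i

theorem Submodule.finrank_map_of_injective_of_injective {R R' M M' : Type*} [Ring R] [Ring R']
    [AddCommGroup M] [Module R M] [AddCommGroup M'] [Module R' M'] {σ : R →+* R'}
    [RingHomSurjective σ] (hσ : Injective σ) {f : M →ₛₗ[σ] M'} (hf : Injective f)
    (W : Submodule R M) : finrank R' (W.map f) = finrank R W := by
  let e : W ≃+ W.map f := AddEquiv.ofBijective (f.submoduleMap W)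
    ⟨LinearMap.submoduleMap_injective hf W, f.submoduleMap_surjective W⟩
  have := lift_rank_eq_of_equiv_equiv σ e ⟨hσ, RingHomSurjective.is_surjective⟩
    fun r x => (f.submoduleMap W).map_smulₛₗ r x
  simpa [finrank, Cardinal.toNat_lift] using (congrArg Cardinal.toNat this).symm

section flag

variable (φ : V →ₛₗ[frobenius k p] V) (K : Submodule k V) (σ₀ : ℕ)

theorem iterMap_succ (i : ℕ) : iterMap φ K (i + 1) = (iterMap φ K i).map φ :=
  iterate_succ_apply' _ _ _

theorem iterMap_le_of_map_le {W : Submodule k V} (hW : W.map φ ≤ W) (hKW : K ≤ W) (i : ℕ) :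
    iterMap φ K i ≤ W := by
  induction i with
  | zero => exact hKW
  | succ i ih => exact (iterMap_succ φ K i).trans_le ((map_mono ih).trans hW)

theorem bigU_le_of_map_le {W : Submodule k V} (hW : W.map φ ≤ W) (hKW : K ≤ W) :
    bigU φ K ≤ W :=
  iSup_le (iterMap_le_of_map_le φ K hW hKW)

theorem le_iterComap_of_map_le {W : Submodule k V} (hW : W.map φ ≤ W) (hWK : W ≤ K) (i : ℕ) :
    W ≤ iterComap φ K i := by
  induction i with
  | zero => exact hWK
  | succ i ih =>
    rw [iterComap, iterate_succ_apply']
    exact (map_le_iff_le_comap.mp hW).trans (comap_mono ih)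

theorem flagU_of_le {m : ℕ} (h : m ≤ σ₀) :
    flagU σ₀ φ K m = ⨅ i ∈ Finset.range (σ₀ - m + 1), iterComap φ K i :=
  if_pos h

theorem flagU_of_ge {m : ℕ} (h : σ₀ ≤ m) :
    flagU σ₀ φ K m = ⨆ i ∈ Finset.range (m - σ₀ + 1), iterMap φ K i := by
  rcases h.eq_or_lt with rfl | hlt
  · simp [flagU, iterMap, iterComap]
  · exact if_neg hlt.not_ge

theorem le_flagU_zero_of_map_le {W : Submodule k V} (hW : W.map φ ≤ W) (hWK : W ≤ K) :
    W ≤ flagU σ₀ φ K 0 := by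
  rw [flagU_of_le φ K σ₀ (Nat.zero_le σ₀)]
  exact le_iInf₂ fun i _ => le_iterComap_of_map_le φ K hW hWK i

theorem flagU_le_iterComap {m i : ℕ} (hm : m ≤ σ₀) (hi : i ≤ σ₀ - m) :
    flagU σ₀ φ K m ≤ iterComap φ K i := by
  rw [flagU_of_le φ K σ₀ hm]
  exact iInf₂_le i (Finset.mem_range_succ_iff.mpr hi)

theorem iterMap_le_flagU {m i : ℕ} (hm : σ₀ ≤ m) (hi : i ≤ m - σ₀) :
    iterMap φ K i ≤ flagU σ₀ φ K m := by
  rw [flagU_of_ge φ K σ₀ hm]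
  exact le_iSup₂ (f := fun i _ => iterMap φ K i) i (Finset.mem_range_succ_iff.mpr hi)

theorem flagU_le_flagU_succ (m : ℕ) : flagU σ₀ φ K m ≤ flagU σ₀ φ K (m + 1) := by
  rcases le_or_gt (m + 1) σ₀ with h | h
  · rw [flagU_of_le φ K σ₀ h]
    refine le_iInf₂ fun i hi => flagU_le_iterComap φ K σ₀ (by omega) ?_
    have := Finset.mem_range.mp hi
    omega
  · rw [flagU_of_ge φ K σ₀ (by omega)]
    refine iSup₂_le fun i hi => iterMap_le_flagU φ K σ₀ h.le ?_
    have := Finset.mem_range.mp hi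
    omega

theorem map_flagU_le_flagU_succ (m : ℕ) :
    (flagU σ₀ φ K m).map φ ≤ flagU σ₀ φ K (m + 1) := by
  rcases le_or_gt (m + 1) σ₀ with h | h
  · rw [flagU_of_le φ K σ₀ h]
    refine le_iInf₂ fun i hi => map_le_iff_le_comap.mpr ?_
    refine (flagU_le_iterComap φ K σ₀ (i := i + 1) (by omega) ?_).trans_eq
      (iterate_succ_apply' _ _ _)
    have := Finset.mem_range.mp hi
    omega
  · rw [flagU_of_ge φ K σ₀ (by omega)]
    simp only [Submodule.map_iSup]
    refine iSup₂_le fun i hi => ?_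
    rw [← iterMap_succ]
    refine iterMap_le_flagU φ K σ₀ h.le ?_
    have := Finset.mem_range.mp hi
    omega

theorem not_map_flagU_le [FiniteDimensional k V] (hU : finrank k (bigU φ K) = 2 * σ₀)
    (hflag : ∀ m : ℕ, m ≤ 2 * σ₀ → finrank k (flagU σ₀ φ K m) = m)
    {m : ℕ} (hm0 : 0 < m) (hm2 : m < 2 * σ₀) :
    ¬ (flagU σ₀ φ K m).map φ ≤ flagU σ₀ φ K m := by
  intro hstable
  have hdim := hflag m hm2.le
  rcases le_or_gt m σ₀ with hm | hm
  · have hUK : flagU σ₀ φ K m ≤ K := flagU_le_iterComap φ K σ₀ hm (Nat.zero_le _)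
    have := finrank_mono (le_flagU_zero_of_map_le φ K σ₀ hstable hUK)
    rw [hflag 0 (Nat.zero_le _)] at this
    omega
  · have hKU : K ≤ flagU σ₀ φ K m := iterMap_le_flagU φ K σ₀ hm.le (Nat.zero_le _)
    have := finrank_mono (bigU_le_of_map_le φ K hstable hKU)
    omega

theorem flagU_succ_eq_sup [FiniteDimensional k V] (hU : finrank k (bigU φ K) = 2 * σ₀)
    (hflag : ∀ m : ℕ, m ≤ 2 * σ₀ → finrank k (flagU σ₀ φ K m) = m)
    {m : ℕ} (hm0 : 0 < m) (hm2 : m < 2 * σ₀) :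
    flagU σ₀ φ K (m + 1) = flagU σ₀ φ K m ⊔ (flagU σ₀ φ K m).map φ := by
  have hlt : flagU σ₀ φ K m < flagU σ₀ φ K m ⊔ (flagU σ₀ φ K m).map φ :=
    left_lt_sup.mpr (not_map_flagU_le φ K σ₀ hU hflag hm0 hm2)
  have := finrank_lt_finrank_of_lt hlt
  refine (eq_of_le_of_finrank_le
    (sup_le (flagU_le_flagU_succ φ K σ₀ m) (map_flagU_le_flagU_succ φ K σ₀ m)) ?_).symm
  rw [hflag m hm2.le] at this
  rw [hflag (m + 1) hm2]
  omega

end flag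

theorem flagU_recurrences_general [FiniteDimensional k V]
    (φ : V →ₛₗ[frobenius k p] V) (hφ : Function.Bijective φ)
    (σ₀ : ℕ) (K : Submodule k V)
    (hU : finrank k ↥(bigU φ K) = 2 * σ₀)
    (hflag : ∀ m : ℕ, m ≤ 2 * σ₀ → finrank k ↥(flagU σ₀ φ K m) = m) :
    ∀ m : ℕ, 0 < m → m < 2 * σ₀ →
      flagU σ₀ φ K (m + 1) = flagU σ₀ φ K m ⊔ Submodule.map φ (flagU σ₀ φ K m) ∧
      Submodule.map φ (flagU σ₀ φ K (m - 1)) =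
        flagU σ₀ φ K m ⊓ Submodule.map φ (flagU σ₀ φ K m) := by
  intro m hm0 hm2
  have finrank_map (W : Submodule k V) : finrank k (W.map φ) = finrank k W :=
    finrank_map_of_injective_of_injective (frobenius k p).injective hφ.injective W
  have hsup := flagU_succ_eq_sup φ K σ₀ hU hflag hm0 hm2
  refine ⟨hsup, ?_⟩
  obtain ⟨n, rfl⟩ : ∃ n, m = n + 1 := ⟨m - 1, by omega⟩
  rw [Nat.add_sub_cancel]
  have hinf := finrank_sup_add_finrank_inf_eq (flagU σ₀ φ K (n + 1)) ((flagU σ₀ φ K (n + 1)).map φ)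
  rw [← hsup, finrank_map, hflag (n + 1) hm2.le, hflag (n + 2) hm2] at hinf
  refine eq_of_le_of_finrank_le (le_inf (map_flagU_le_flagU_succ φ K σ₀ n)
    (map_mono (flagU_le_flagU_succ φ K σ₀ n))) ?_
  rw [finrank_map, hflag n (by omega)]
  omega

/-- for `0 < m < 2σ₀` the flag `U_m` satisfies the recurrences
`U_{m+1} = U_m + φ(U_m)` and `φ(U_{m-1}) = U_m ∩ φ(U_m)`. -/
theorem flagU_recurrences [FiniteDimensional k V]
    (φ : V →ₛₗ[frobenius k p] V) (hφ : Function.Bijective φ)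
    (σ₀ : ℕ) (hσ₀ : 1 ≤ σ₀) (K : Submodule k V)
    (hK : finrank k K = σ₀)
    (hKφ : finrank k ↥(K ⊔ Submodule.map φ K) = σ₀ + 1)
    (hU : finrank k ↥(bigU φ K) = 2 * σ₀)
    (hflag : ∀ m : ℕ, m ≤ 2 * σ₀ → finrank k ↥(flagU σ₀ φ K m) = m) :
    ∀ m : ℕ, 0 < m → m < 2 * σ₀ →
      flagU σ₀ φ K (m + 1) = flagU σ₀ φ K m ⊔ Submodule.map φ (flagU σ₀ φ K m) ∧
      Submodule.map φ (flagU σ₀ φ K (m - 1)) =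
        flagU σ₀ φ K m ⊓ Submodule.map φ (flagU σ₀ φ K m) :=
  flagU_recurrences_general φ hφ σ₀ K hU hflag
end

section
/- If e is a nonzero vector spanning U_1, and e_m := φ^{m-1}(e) for m ≥ 1, then for every 1 ≤ m ≤ 2σ₀ the vectors (e_1, ..., e_m) form a k-basis of U_m. -/
open Module Submodule Function

/-- if `e` spans the line `U_1` and `e_m := φ^{m-1}(e)`, then for
`1 ≤ m ≤ 2σ₀` the vectors `(e_1, …, e_m)` form a `k`-basis of `U_m`. -/
theorem flag_basis_of_iterates
    (k : Type*) [Field k] (p : ℕ) [Fact p.Prime] [CharP k p] [PerfectRing k p]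
    (V : Type*) [AddCommGroup V] [Module k V] [FiniteDimensional k V]
    (φ : V →ₛₗ[frobenius k p] V) (hφ : Function.Bijective φ)
    (σ₀ : ℕ) (hσ₀ : 1 ≤ σ₀)
    (U : ℕ → Submodule k V)
    (hmono : ∀ m : ℕ, m < 2 * σ₀ → U m ≤ U (m + 1))
    (hdim : ∀ m : ℕ, m ≤ 2 * σ₀ → finrank k ↥(U m) = m)
    (hrec : ∀ m : ℕ, 0 < m → m < 2 * σ₀ →
      U (m + 1) = U m ⊔ Submodule.map φ (U m))
    (e : V) (he : e ∈ U 1) (hne : e ≠ 0) :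
    ∀ m : ℕ, 1 ≤ m → m ≤ 2 * σ₀ →
      LinearIndependent k (fun i : Fin m => (⇑φ)^[(i : ℕ)] e) ∧
      Submodule.span k (Set.range (fun i : Fin m => (⇑φ)^[(i : ℕ)] e)) = U m := by
  -- First prove the span statement by induction.
  have hspan : ∀ m : ℕ, 1 ≤ m → m ≤ 2 * σ₀ →
      Submodule.span k (Set.range (fun i : Fin m => (⇑φ)^[(i : ℕ)] e)) = U m := by
    intro m hm1
    induction m, hm1 using Nat.le_induction with
    | base =>
      intro _
      have hr : Set.range (fun i : Fin 1 => (⇑φ)^[(i : ℕ)] e) = {e} := by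
        ext x
        simp only [Set.mem_range, Set.mem_singleton_iff]
        constructor
        · rintro ⟨i, rfl⟩
          have : (i : ℕ) = 0 := by omega
          simp [this]
        · rintro rfl; exact ⟨0, rfl⟩
      rw [hr]
      have hle : Submodule.span k ({e} : Set V) ≤ U 1 := by
        rw [Submodule.span_le, Set.singleton_subset_iff]; exact he
      refine Submodule.eq_of_le_of_finrank_le hle ?_
      rw [hdim 1 (by omega), finrank_span_singleton hne]
    | succ m hm ih =>
      intro hle2
      have ihs := ih (by omega)
      have hr := hrec m (by omega) (by omega)
      rw [hr]
      apply le_antisymm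
      · rw [Submodule.span_le]
        rintro x ⟨i, rfl⟩
        rcases lt_or_eq_of_le (Nat.lt_succ_iff.mp i.isLt) with hi | hi
        · apply Submodule.mem_sup_left
          rw [← ihs]
          exact Submodule.subset_span ⟨⟨(i : ℕ), hi⟩, rfl⟩
        · apply Submodule.mem_sup_right
          have h1 : (i : ℕ) = (m - 1) + 1 := by omega
          show (⇑φ)^[(i : ℕ)] e ∈ map φ (U m)
          rw [h1, Function.iterate_succ_apply']
          refine Submodule.mem_map_of_mem ?_
          rw [← ihs]
          exact Submodule.subset_span ⟨⟨m - 1, by omega⟩, rfl⟩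
      · apply sup_le
        · rw [← ihs, Submodule.span_le]
          rintro x ⟨i, rfl⟩
          exact Submodule.subset_span ⟨⟨(i : ℕ), by omega⟩, rfl⟩
        · rw [← ihs, Submodule.map_span, Submodule.span_le]
          rintro x ⟨y, ⟨i, rfl⟩, rfl⟩
          apply Submodule.subset_span
          refine ⟨⟨(i : ℕ) + 1, by omega⟩, ?_⟩
          show (⇑φ)^[(i : ℕ) + 1] e = φ ((⇑φ)^[(i : ℕ)] e)
          exact Function.iterate_succ_apply' (⇑φ) (i : ℕ) e
  intro m hm1 hm2
  refine ⟨?_, hspan m hm1 hm2⟩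
  rw [linearIndependent_iff_card_eq_finrank_span]
  rw [Set.finrank, hspan m hm1 hm2, hdim m hm2, Fintype.card_fin]
end

section
/- Let W ⊂ U be a φ-stable k-subspace (φ(W) = W) of dimension s₀, and suppose that for some index m with 1 ≤ m ≤ 2σ₀ - 1 one has W ∩ U_m = W ∩ U_{m+1}. Then φ(W ∩ U_m) = W ∩ U_m, and moreover W ∩ U_{m-1} = W ∩ U_m. -/
/-!
Since `W ∩ U_m = W ∩ U_{m+1}` and `φ(U_m) ⊆ U_{m+1}`, the map `φ` sends `W ∩ U_m` into itself;
being injective and semilinear over a bijective Frobenius it preserves dimension, so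
`φ(W ∩ U_m) = W ∩ U_m`. Then `φ(W ∩ U_{m-1}) = W ∩ U_m ∩ φ(U_m) = φ(W ∩ U_m)`, and injectivity
of `φ` gives `W ∩ U_{m-1} = W ∩ U_m`.
-/

open Module Submodule Function

namespace Submodule

theorem finrank_map_of_injective {K K₂ V V₂ : Type*} [DivisionRing K] [DivisionRing K₂]
    [AddCommGroup V] [AddCommGroup V₂] [Module K V] [Module K₂ V₂] {σ : K →+* K₂}
    [RingHomSurjective σ] {f : V →ₛₗ[σ] V₂} (hf : Injective f) (S : Submodule K V) :
    finrank K₂ (S.map f) = finrank K S := by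
  let j : S ≃+ S.map f := AddEquiv.ofBijective (f.submoduleMap S)
    ⟨fun a b h => Subtype.ext (hf (congrArg Subtype.val h)), f.submoduleMap_surjective S⟩
  have h := lift_rank_eq_of_equiv_equiv σ j ⟨σ.injective, σ.surjective⟩
    fun r x => Subtype.ext (f.map_smulₛₗ r x)
  simpa [finrank] using (congrArg Cardinal.toNat h).symm

section Endomorphism

variable {K V : Type*} [DivisionRing K] [AddCommGroup V] [Module K V]
  {σ : K →+* K} [RingHomSurjective σ] {f : V →ₛₗ[σ] V}

theorem map_eq_self_of_map_le (hf : Injective f) {S : Submodule K V} [FiniteDimensional K S]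
    (h : S.map f ≤ S) : S.map f = S :=
  eq_of_le_of_finrank_eq h (finrank_map_of_injective hf S)

theorem map_inf_eq_self_of_inf_eq [FiniteDimensional K V] (hf : Injective f)
    {W X Y : Submodule K V} (hW : W.map f = W) (hXY : X.map f ≤ Y) (heq : W ⊓ X = W ⊓ Y) :
    (W ⊓ X).map f = W ⊓ X :=
  map_eq_self_of_map_le hf <|
    (le_inf ((map_mono inf_le_left).trans hW.le) ((map_mono inf_le_right).trans hXY)).trans heq.ge

theorem inf_eq_inf_of_map_eq_inf_map (hf : Injective f) {W X Z : Submodule K V}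
    (hW : W.map f = W) (hWX : (W ⊓ X).map f = W ⊓ X) (hZ : Z.map f = X ⊓ X.map f) :
    W ⊓ Z = W ⊓ X :=
  map_injective_of_injective hf <| calc
    (W ⊓ Z).map f = W ⊓ X ⊓ X.map f := by rw [map_inf f hf, hW, hZ, inf_assoc]
    _ = (W ⊓ X).map f ⊓ X.map f := by rw [hWX]
    _ = (W ⊓ X).map f := by rw [← map_inf f hf, inf_assoc, inf_idem]

end Endomorphism

end Submodule

theorem stable_intersection_propagates_general
    (k : Type*) [Field k] (p : ℕ) [Fact p.Prime] [CharP k p] [PerfectRing k p]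
    (V : Type*) [AddCommGroup V] [Module k V] [FiniteDimensional k V]
    (φ : V →ₛₗ[frobenius k p] V) (hφ : Function.Bijective φ)
    (σ₀ : ℕ)
    (U : ℕ → Submodule k V)
    (hrec1 : ∀ m : ℕ, 0 < m → m < 2 * σ₀ →
      U (m + 1) = U m ⊔ Submodule.map φ (U m))
    (hrec2 : ∀ m : ℕ, 0 < m → m < 2 * σ₀ →
      Submodule.map φ (U (m - 1)) = U m ⊓ Submodule.map φ (U m))
    (W : Submodule k V)
    (hWstable : Submodule.map φ W = W)
    (m : ℕ) (hm1 : 1 ≤ m) (hm2 : m ≤ 2 * σ₀ - 1)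
    (heq : W ⊓ U m = W ⊓ U (m + 1)) :
    Submodule.map φ (W ⊓ U m) = W ⊓ U m ∧ W ⊓ U (m - 1) = W ⊓ U m := by
  have hm : m < 2 * σ₀ := by omega
  have hfix : (W ⊓ U m).map φ = W ⊓ U m :=
    map_inf_eq_self_of_inf_eq hφ.injective hWstable (hrec1 m hm1 hm ▸ le_sup_right) heq
  exact ⟨hfix, inf_eq_inf_of_map_eq_inf_map hφ.injective hWstable hfix (hrec2 m hm1 hm)⟩

/-- if `W ⊂ U` is φ-stable and `W ∩ U_m = W ∩ U_{m+1}` for some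
`1 ≤ m ≤ 2σ₀ - 1`, then `φ(W ∩ U_m) = W ∩ U_m` and `W ∩ U_{m-1} = W ∩ U_m`. -/
theorem stable_intersection_propagates
    (k : Type*) [Field k] (p : ℕ) [Fact p.Prime] [CharP k p] [PerfectRing k p]
    (V : Type*) [AddCommGroup V] [Module k V] [FiniteDimensional k V]
    (φ : V →ₛₗ[frobenius k p] V) (hφ : Function.Bijective φ)
    (σ₀ : ℕ) (hσ₀ : 1 ≤ σ₀)
    (U : ℕ → Submodule k V)
    (hmono : ∀ m : ℕ, m < 2 * σ₀ → U m ≤ U (m + 1))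
    (hdim : ∀ m : ℕ, m ≤ 2 * σ₀ → finrank k ↥(U m) = m)
    (hU0 : U 0 = ⊥)
    (hstable : Submodule.map φ (U (2 * σ₀)) = U (2 * σ₀))
    (hrec1 : ∀ m : ℕ, 0 < m → m < 2 * σ₀ →
      U (m + 1) = U m ⊔ Submodule.map φ (U m))
    (hrec2 : ∀ m : ℕ, 0 < m → m < 2 * σ₀ →
      Submodule.map φ (U (m - 1)) = U m ⊓ Submodule.map φ (U m))
    (W : Submodule k V) (hWU : W ≤ U (2 * σ₀))
    (hWstable : Submodule.map φ W = W)
    (s₀ : ℕ) (hW : finrank k W = s₀)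
    (m : ℕ) (hm1 : 1 ≤ m) (hm2 : m ≤ 2 * σ₀ - 1)
    (heq : W ⊓ U m = W ⊓ U (m + 1)) :
    Submodule.map φ (W ⊓ U m) = W ⊓ U m ∧ W ⊓ U (m - 1) = W ⊓ U m :=
  stable_intersection_propagates_general k p V φ hφ σ₀ U hrec1 hrec2 W hWstable m hm1 hm2 heq
end

section
/- If W ⊂ U is a φ-stable subspace of dimension s₀, then for all 0 ≤ m ≤ 2σ₀ one has dim_k(W ∩ U_m) = max(0, s₀ + m - 2σ₀). In particular the dimension of W ∩ U_m depends only on m and dim W. -/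
open Module Submodule Function

/-- a φ-stable subspace `W ⊂ U` of dimension `s₀` meets the flag in
`dim (W ∩ U_m) = max (0, s₀ + m - 2σ₀)`. -/
theorem stable_subspace_meets_flag
    (k : Type*) [Field k] (p : ℕ) [Fact p.Prime] [CharP k p] [PerfectRing k p]
    (V : Type*) [AddCommGroup V] [Module k V] [FiniteDimensional k V]
    (φ : V →ₛₗ[frobenius k p] V) (hφ : Function.Bijective φ)
    (σ₀ : ℕ) (hσ₀ : 1 ≤ σ₀)
    (U : ℕ → Submodule k V)
    (hmono : ∀ m : ℕ, m < 2 * σ₀ → U m ≤ U (m + 1))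
    (hdim : ∀ m : ℕ, m ≤ 2 * σ₀ → finrank k ↥(U m) = m)
    (hU0 : U 0 = ⊥)
    (hstable : Submodule.map φ (U (2 * σ₀)) = U (2 * σ₀))
    (hrec1 : ∀ m : ℕ, 0 < m → m < 2 * σ₀ →
      U (m + 1) = U m ⊔ Submodule.map φ (U m))
    (hrec2 : ∀ m : ℕ, 0 < m → m < 2 * σ₀ →
      Submodule.map φ (U (m - 1)) = U m ⊓ Submodule.map φ (U m))
    (W : Submodule k V) (hWU : W ≤ U (2 * σ₀))
    (hWstable : Submodule.map φ W = W)
    (s₀ : ℕ) (hW : finrank k W = s₀)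
    (m : ℕ) (hm : m ≤ 2 * σ₀) :
    (finrank k ↥(W ⊓ U m) : ℤ) = max 0 ((s₀ : ℤ) + m - 2 * σ₀) := by
  -- Lemma A: if φ maps W ⊓ U n into itself and n < 2σ₀, then W ⊓ U n = ⊥.
  have lemA : ∀ n : ℕ, n < 2 * σ₀ →
      Submodule.map φ (W ⊓ U n) ≤ W ⊓ U n → W ⊓ U n = ⊥ := by
    intro n
    induction n with
    | zero => intro _ _; rw [hU0, inf_bot_eq]
    | succ n ih =>
      intro hlt hmap
      have hrec := hrec2 (n + 1) n.succ_pos hlt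
      simp only [Nat.succ_sub_one] at hrec
      have hle : Submodule.map φ (W ⊓ U (n + 1)) ≤ Submodule.map φ (U n) := by
        rw [hrec]
        exact le_inf (hmap.trans inf_le_right) (Submodule.map_mono inf_le_right)
      have hWle : W ⊓ U (n + 1) ≤ U n := by
        have h2 : W ⊓ U (n + 1) ≤ Submodule.comap φ (Submodule.map φ (U n)) :=
          fun x hx => hle (Submodule.mem_map_of_mem hx)
        rwa [Submodule.comap_map_eq_of_injective hφ.1] at h2
      have heq : W ⊓ U (n + 1) = W ⊓ U n :=
        le_antisymm (le_inf inf_le_left hWle)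
          (inf_le_inf_left W (hmono n (Nat.lt_of_succ_lt hlt)))
      rw [heq] at hmap ⊢
      exact ih (Nat.lt_of_succ_lt hlt) hmap
  -- Step: if the intersection doesn't grow from m to m+1 (m < 2σ₀), it is trivial.
  have step : ∀ n : ℕ, n < 2 * σ₀ → W ⊓ U (n + 1) = W ⊓ U n → W ⊓ U (n + 1) = ⊥ := by
    intro n hlt heq
    rcases Nat.eq_zero_or_pos n with h0 | hpos
    · subst h0; rw [heq, hU0, inf_bot_eq]
    · have hmapU : Submodule.map φ (U n) ≤ U (n + 1) := by
        rw [hrec1 n hpos hlt]; exact le_sup_right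
      have hself : Submodule.map φ (W ⊓ U n) ≤ W ⊓ U n := by
        calc Submodule.map φ (W ⊓ U n)
            ≤ Submodule.map φ W ⊓ Submodule.map φ (U n) := Submodule.map_inf_le _
          _ ≤ W ⊓ U (n + 1) := by rw [hWstable]; exact inf_le_inf le_rfl hmapU
          _ = W ⊓ U n := heq
      rw [heq]
      exact lemA n hlt hself
  -- basic dimension facts
  have hmonoWU : ∀ n : ℕ, n < 2 * σ₀ → W ⊓ U n ≤ W ⊓ U (n + 1) :=
    fun n hlt => inf_le_inf_left W (hmono n hlt)
  have hd1 : ∀ n : ℕ, n < 2 * σ₀ →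
      finrank k ↥(W ⊓ U (n + 1)) ≤ finrank k ↥(W ⊓ U n) + 1 := by
    intro n hlt
    have hsum := Submodule.finrank_sup_add_finrank_inf_eq (W ⊓ U (n + 1)) (U n)
    have h1 : (W ⊓ U (n + 1)) ⊓ U n = W ⊓ U n := by
      rw [inf_assoc, inf_eq_right.mpr (hmono n hlt)]
    have h2 : (W ⊓ U (n + 1)) ⊔ U n ≤ U (n + 1) :=
      sup_le inf_le_right (hmono n hlt)
    have h3 : finrank k ↥((W ⊓ U (n + 1)) ⊔ U n) ≤ n + 1 :=
      le_trans (Submodule.finrank_mono h2) (le_of_eq (hdim (n + 1) hlt))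
    have h4 : finrank k ↥(U n) = n := hdim n (le_of_lt hlt)
    rw [h1, h4] at hsum
    omega
  -- main downward induction
  have key : ∀ j : ℕ, j ≤ 2 * σ₀ →
      (finrank k ↥(W ⊓ U (2 * σ₀ - j)) : ℤ) = max 0 ((s₀ : ℤ) - j) := by
    intro j
    induction j with
    | zero =>
      intro _
      have hWeq : W ⊓ U (2 * σ₀ - 0) = W := by
        simpa using inf_eq_left.mpr hWU
      rw [hWeq, hW]
      exact (sup_eq_right.mpr (by positivity)).symm
    | succ j ih =>
      intro hj
      have hj' : j ≤ 2 * σ₀ := Nat.le_of_succ_le hj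
      have ihj := ih hj'
      set n := 2 * σ₀ - (j + 1) with hn
      have hn1 : n + 1 = 2 * σ₀ - j := by omega
      have hnlt : n < 2 * σ₀ := by omega
      rw [← hn1] at ihj
      rcases Nat.eq_zero_or_pos (finrank k ↥(W ⊓ U (n + 1))) with hz | hpos
      · -- intersection at n+1 is trivial, so also at n
        have hbot : W ⊓ U (n + 1) = ⊥ := by
          have : FiniteDimensional k ↥(W ⊓ U (n + 1)) := inferInstance
          exact Submodule.finrank_eq_zero.mp hz
        have hbotn : W ⊓ U n = ⊥ :=
          le_bot_iff.mp (hbot ▸ hmonoWU n hnlt)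
        rw [hbotn, finrank_bot]
        rw [hz] at ihj
        have : (s₀ : ℤ) - j ≤ 0 := by
          by_contra hc
          push_neg at hc
          rw [sup_eq_right.mpr (le_of_lt hc)] at ihj
          omega
        rw [sup_eq_left.mpr (by push_cast; omega : (s₀ : ℤ) - ((j : ℕ) + 1 : ℕ) ≤ 0)]
        simp
      · -- intersection grows strictly from n to n+1
        have hne : finrank k ↥(W ⊓ U n) ≠ finrank k ↥(W ⊓ U (n + 1)) := by
          intro heq
          have heqsub : W ⊓ U n = W ⊓ U (n + 1) :=
            Submodule.eq_of_le_of_finrank_eq (hmonoWU n hnlt) heq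
          have := step n hnlt heqsub.symm
          rw [this, finrank_bot] at hpos
          omega
        have hle := Submodule.finrank_mono (hmonoWU n hnlt)
        have hub := hd1 n hnlt
        have hexact : finrank k ↥(W ⊓ U n) + 1 = finrank k ↥(W ⊓ U (n + 1)) := by omega
        -- from ihj and positivity, max 0 (s₀ - j) = finrank (W ⊓ U (n+1)) ≥ 1
        have hval : (s₀ : ℤ) - j = (finrank k ↥(W ⊓ U (n + 1)) : ℤ) := by
          rcases le_total ((s₀ : ℤ) - j) 0 with h | h
          · rw [sup_eq_left.mpr h] at ihj; omega
          · rw [sup_eq_right.mpr h] at ihj; omega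
        rw [sup_eq_right.mpr (by push_cast; omega : (0 : ℤ) ≤ (s₀ : ℤ) - ↑(j + 1))]
        push_cast
        omega
  have hkey := key (2 * σ₀ - m) (by omega)
  have hmm : 2 * σ₀ - (2 * σ₀ - m) = m := by omega
  rw [hmm] at hkey
  rw [hkey]
  congr 1
  omega
end

section
/- Let A ⊂ V be a φ-stable k-subspace with dim A = s and dim(A ∩ U) = s₀. Then dim_k(A ∩ φ(K)) = max(0, s₀ - σ₀) and dim_k(A ∩ (K + φ(K))) = max(0, s₀ - σ₀ + 1) if s₀ ≥ σ₀, while both intersections are zero if s₀ < σ₀. Consequently, dim_k((A ∩ (K + φ(K)))/(A ∩ φ(K))) equals 1 if s₀ ≥ σ₀ and 0 otherwise. -/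
/-!
Put `d m = dim (A ∩ U_m)`. Since `dim U_m = m`, the function `d` starts at `0`, ends at
`d (2σ₀) = s₀` and increases by `0` or `1` at each step. Once it increases it keeps increasing:
if `x ∈ A ∩ U_{m+1}` is not in `U_m`, then `φ x ∈ A ∩ U_{m+2}` is not in `U_{m+1}`, because
`U_{m+1} ∩ φ(U_{m+1}) = φ(U_m)` and `φ` is injective. Hence `d m = max (0, s₀ - (2σ₀ - m))`.
Evaluate at `m = σ₀`, where `U_m = K` and `A ∩ φ(K) = φ(A ∩ K)`, and at `m = σ₀ + 1`.
-/

open Module Submodule Function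

variable {k : Type*} [Field k] {p : ℕ} [Fact p.Prime] [CharP k p] [PerfectRing k p]
  {V : Type*} [AddCommGroup V] [Module k V]

theorem eq_tsub_of_jump_propagates {d : ℕ → ℕ} {n : ℕ} (h0 : d 0 = 0)
    (hmono : ∀ m < n, d m ≤ d (m + 1)) (hstep : ∀ m < n, d (m + 1) ≤ d m + 1)
    (hjump : ∀ m, m + 2 ≤ n → d m < d (m + 1) → d (m + 1) < d (m + 2)) :
    ∀ m ≤ n, d m = d n - (n - m) := by
  have flat : ∀ m < n, d (m + 1) = d m → d m = 0 := by
    intro m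
    induction m with
    | zero => exact fun _ _ => h0
    | succ m ih =>
      intro hm hflat
      rw [show m + 1 + 1 = m + 2 from rfl] at hflat
      have hprev : d (m + 1) = d m := by
        have := mt (hjump m (by omega)) (by omega)
        have := hmono m (by omega)
        omega
      rw [hprev]
      exact ih (by omega) hprev
  have down : ∀ j ≤ n, d (n - j) = d n - j := by
    intro j
    induction j with
    | zero => simp
    | succ j ih =>
      intro hj
      have hsucc : n - (j + 1) + 1 = n - j := by omega
      have hm := hmono (n - (j + 1)) (by omega)
      have hs := hstep (n - (j + 1)) (by omega)
      have hf := flat (n - (j + 1)) (by omega)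
      rw [hsucc] at hm hs hf
      have := ih (by omega)
      by_cases heq : d (n - j) = d (n - (j + 1))
      · have := hf heq
        omega
      · omega
  intro m hm
  simpa [Nat.sub_sub_self hm] using down (n - m) (Nat.sub_le n m)

theorem Submodule.not_inf_le_of_not_inf_le_of_map_le {R M : Type*} [Semiring R]
    [AddCommMonoid M] [Module R M] {σ : R →+* R} [RingHomSurjective σ] {φ : M →ₛₗ[σ] M}
    (hφ : Injective φ) {A W₀ W₁ W₂ : Submodule R M} (hA : A.map φ ≤ A)
    (h₂ : W₁ ⊔ W₁.map φ ≤ W₂) (h₁ : W₁ ⊓ W₁.map φ ≤ W₀.map φ) (h : ¬A ⊓ W₁ ≤ W₀) :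
    ¬A ⊓ W₂ ≤ W₁ := by
  intro hle
  obtain ⟨x, ⟨hxA, hx₁⟩, hx₀⟩ := SetLike.not_le_iff_exists.1 h
  have hφx₁ : φ x ∈ W₁ := hle ⟨hA (mem_map_of_mem hxA), h₂ (mem_sup_right (mem_map_of_mem hx₁))⟩
  obtain ⟨y, hy, hyx⟩ := h₁ ⟨hφx₁, mem_map_of_mem hx₁⟩
  exact hx₀ (hφ hyx ▸ hy)

theorem Submodule.finrank_map_of_injective_of_semilinear {V₂ : Type*} [AddCommGroup V₂]
    [Module k V₂] {σ : k →+* k} [RingHomSurjective σ] {φ : V →ₛₗ[σ] V₂} (hφ : Injective φ)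
    (W : Submodule k V) : finrank k (W.map φ) = finrank k W := by
  have hbij : Bijective (φ.submoduleMap W : W → W.map φ) :=
    ⟨fun _ _ h => Subtype.ext (hφ (congrArg Subtype.val h)), φ.submoduleMap_surjective W⟩
  have hrank := lift_rank_eq_of_equiv_equiv σ
    (AddEquiv.ofBijective (M := W) (N := W.map φ) (φ.submoduleMap W) hbij)
    ⟨σ.injective, σ.surjective⟩ (φ.submoduleMap W).map_smulₛₗ
  simpa only [finrank, Cardinal.toNat_lift] using congrArg Cardinal.toNat hrank.symm

section FiniteDimensional

variable [FiniteDimensional k V]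

theorem Submodule.finrank_inf_add_finrank_le (A : Submodule k V) {W W' : Submodule k V}
    (h : W ≤ W') : finrank k ↥(A ⊓ W') + finrank k W ≤ finrank k ↥(A ⊓ W) + finrank k W' := by
  have hinf : A ⊓ W' ⊓ W = A ⊓ W := by rw [inf_assoc, inf_eq_right.2 h]
  have hsup := finrank_mono (sup_le (inf_le_right : A ⊓ W' ≤ W') h)
  have := finrank_sup_add_finrank_inf_eq (A ⊓ W') W
  rw [hinf] at this
  omega

theorem Submodule.finrank_inf_lt_finrank_inf_iff (A : Submodule k V) {W W' : Submodule k V}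
    (h : W ≤ W') : finrank k ↥(A ⊓ W) < finrank k ↥(A ⊓ W') ↔ ¬A ⊓ W' ≤ W := by
  constructor
  · intro hlt hle
    exact (finrank_mono (le_inf inf_le_left hle)).not_gt hlt
  · intro hnle
    exact finrank_lt_finrank_of_lt
      (lt_of_le_not_ge (inf_le_inf_left A h) fun hle => hnle (hle.trans inf_le_right))

theorem finrank_inf_eq_tsub_of_semilinear_flag {σ : k →+* k} [RingHomSurjective σ]
    {φ : V →ₛₗ[σ] V} (hφ : Injective φ) {A : Submodule k V} (hA : A.map φ ≤ A)
    {F : ℕ → Submodule k V} {n : ℕ} (hdim : ∀ m ≤ n, finrank k (F m) = m)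
    (hsucc : ∀ m, 0 < m → m < n → F m ⊔ (F m).map φ ≤ F (m + 1))
    (hpred : ∀ m, 0 < m → m < n → F m ⊓ (F m).map φ ≤ (F (m - 1)).map φ) :
    ∀ m ≤ n, finrank k ↥(A ⊓ F m) = finrank k ↥(A ⊓ F n) - (n - m) := by
  have hF0 : F 0 = ⊥ := finrank_eq_zero.1 (hdim 0 (Nat.zero_le n))
  have hle : ∀ m < n, F m ≤ F (m + 1) := by
    intro m hm
    rcases m.eq_zero_or_pos with rfl | hpos
    · exact hF0 ▸ bot_le
    · exact le_sup_left.trans (hsucc m hpos hm)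
  refine eq_tsub_of_jump_propagates (d := fun m => finrank k ↥(A ⊓ F m)) ?_ ?_ ?_ ?_
  · simp [hF0]
  · exact fun m hm => finrank_mono (inf_le_inf_left A (hle m hm))
  · intro m hm
    have := finrank_inf_add_finrank_le A (hle m hm)
    rw [hdim m hm.le, hdim (m + 1) hm] at this
    omega
  · intro m hm hjump
    rw [finrank_inf_lt_finrank_inf_iff A (hle m (by omega))] at hjump
    rw [finrank_inf_lt_finrank_inf_iff A (hle (m + 1) (by omega))]
    exact not_inf_le_of_not_inf_le_of_map_le hφ hA (hsucc (m + 1) (by omega) (by omega))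
      (by simpa using hpred (m + 1) (by omega) (by omega)) hjump

end FiniteDimensional

theorem flagU_self (σ₀ : ℕ) (φ : V →ₛₗ[frobenius k p] V) (K : Submodule k V) :
    flagU σ₀ φ K σ₀ = K := by
  simp [flagU, iterComap]

theorem flagU_succ_self (σ₀ : ℕ) (φ : V →ₛₗ[frobenius k p] V) (K : Submodule k V) :
    flagU σ₀ φ K (σ₀ + 1) = K ⊔ K.map φ := by
  rw [flagU, if_neg (by omega), show σ₀ + 1 - σ₀ + 1 = 2 by omega]
  rw [Finset.range_add_one, Finset.iSup_insert, Finset.range_one, Finset.iSup_singleton, sup_comm]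
  rfl

theorem flagU_le_bigU (σ₀ : ℕ) (φ : V →ₛₗ[frobenius k p] V) (K : Submodule k V) (m : ℕ) :
    flagU σ₀ φ K m ≤ bigU φ K := by
  unfold flagU
  split_ifs
  · exact (iInf₂_le 0 (by simp)).trans (le_iSup (iterMap φ K) 0)
  · exact iSup₂_le fun i _ => le_iSup (iterMap φ K) i

theorem stable_subspace_meets_K_general [FiniteDimensional k V]
    (φ : V →ₛₗ[frobenius k p] V) (hφ : Function.Bijective φ)
    (σ₀ : ℕ) (hσ₀ : 1 ≤ σ₀) (K : Submodule k V)
    (hU : finrank k ↥(bigU φ K) = 2 * σ₀)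
    (hflag : ∀ m : ℕ, m ≤ 2 * σ₀ → finrank k ↥(flagU σ₀ φ K m) = m)
    (hrec1 : ∀ m : ℕ, 0 < m → m < 2 * σ₀ →
      flagU σ₀ φ K (m + 1) = flagU σ₀ φ K m ⊔ Submodule.map φ (flagU σ₀ φ K m))
    (hrec2 : ∀ m : ℕ, 0 < m → m < 2 * σ₀ →
      Submodule.map φ (flagU σ₀ φ K (m - 1)) =
        flagU σ₀ φ K m ⊓ Submodule.map φ (flagU σ₀ φ K m))
    (A : Submodule k V) (hA : Submodule.map φ A = A)
    (s₀ : ℕ) (hs₀ : finrank k ↥(A ⊓ bigU φ K) = s₀) :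
    (s₀ < σ₀ → A ⊓ Submodule.map φ K = ⊥ ∧ A ⊓ (K ⊔ Submodule.map φ K) = ⊥) ∧
    (σ₀ ≤ s₀ → finrank k ↥(A ⊓ Submodule.map φ K) = s₀ - σ₀ ∧
      finrank k ↥(A ⊓ (K ⊔ Submodule.map φ K)) = s₀ - σ₀ + 1) ∧
    finrank k ↥(A ⊓ (K ⊔ Submodule.map φ K)) - finrank k ↥(A ⊓ Submodule.map φ K) =
      (if σ₀ ≤ s₀ then 1 else 0) := by
  have htop : flagU σ₀ φ K (2 * σ₀) = bigU φ K :=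
    eq_of_le_of_finrank_le (flagU_le_bigU σ₀ φ K _) (by rw [hU, hflag _ le_rfl])
  have hd := finrank_inf_eq_tsub_of_semilinear_flag hφ.injective hA.le hflag
    (fun m h h' => (hrec1 m h h').ge) (fun m h h' => (hrec2 m h h').ge)
  rw [htop, hs₀] at hd
  have hφK : finrank k ↥(A ⊓ K.map φ) = s₀ - σ₀ := by
    rw [← hA, ← map_inf φ hφ.injective, finrank_map_of_injective_of_semilinear hφ.injective,
      ← flagU_self σ₀ φ K, hd σ₀ (by omega)]
    omega
  have hKφK : finrank k ↥(A ⊓ (K ⊔ K.map φ)) = s₀ - (σ₀ - 1) := by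
    rw [← flagU_succ_self, hd (σ₀ + 1) (by omega)]
    omega
  have hbot : s₀ < σ₀ → A ⊓ (K ⊔ K.map φ) = ⊥ := fun h => finrank_eq_zero.1 (by omega)
  refine ⟨fun h => ⟨?_, hbot h⟩, fun h => ⟨hφK, by omega⟩, by split_ifs <;> omega⟩
  exact eq_bot_iff.2 (hbot h ▸ inf_le_inf_left A le_sup_right)

/-- dimensions of the intersections of a φ-stable subspace `A` with
`φ(K)` and `K + φ(K)`, and of the quotient `(A ∩ (K + φ(K)))/(A ∩ φ(K))`. -/
theorem stable_subspace_meets_K [FiniteDimensional k V]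
    (φ : V →ₛₗ[frobenius k p] V) (hφ : Function.Bijective φ)
    (σ₀ : ℕ) (hσ₀ : 1 ≤ σ₀) (K : Submodule k V)
    (hK : finrank k K = σ₀)
    (hKφ : finrank k ↥(K ⊔ Submodule.map φ K) = σ₀ + 1)
    (hU : finrank k ↥(bigU φ K) = 2 * σ₀)
    (hflag : ∀ m : ℕ, m ≤ 2 * σ₀ → finrank k ↥(flagU σ₀ φ K m) = m)
    (hrec1 : ∀ m : ℕ, 0 < m → m < 2 * σ₀ →
      flagU σ₀ φ K (m + 1) = flagU σ₀ φ K m ⊔ Submodule.map φ (flagU σ₀ φ K m))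
    (hrec2 : ∀ m : ℕ, 0 < m → m < 2 * σ₀ →
      Submodule.map φ (flagU σ₀ φ K (m - 1)) =
        flagU σ₀ φ K m ⊓ Submodule.map φ (flagU σ₀ φ K m))
    (A : Submodule k V) (hA : Submodule.map φ A = A)
    (s s₀ : ℕ) (hs : finrank k A = s) (hs₀ : finrank k ↥(A ⊓ bigU φ K) = s₀) :
    (s₀ < σ₀ → A ⊓ Submodule.map φ K = ⊥ ∧ A ⊓ (K ⊔ Submodule.map φ K) = ⊥) ∧
    (σ₀ ≤ s₀ → finrank k ↥(A ⊓ Submodule.map φ K) = s₀ - σ₀ ∧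
      finrank k ↥(A ⊓ (K ⊔ Submodule.map φ K)) = s₀ - σ₀ + 1) ∧
    finrank k ↥(A ⊓ (K ⊔ Submodule.map φ K)) - finrank k ↥(A ⊓ Submodule.map φ K) =
      (if σ₀ ≤ s₀ then 1 else 0) :=
  stable_subspace_meets_K_general φ hφ σ₀ hσ₀ K hU hflag hrec1 hrec2 A hA s₀ hs₀
end

section
/- If dim_{F_p} T < σ₀ for an F_p-subspace T ⊂ N, then the map T ⊗_{F_p} k → (N ⊗ k)/φ(K) induced by the quotient is injective, and even the composite T ⊗ k → (N ⊗ k)/(K + φ(K)) is injective. In particular (taking T a line), for every nonzero v ∈ N the image of v ⊗ 1 in (N ⊗ k)/φ(K) is nonzero, and if σ₀ ≥ 2 its image in (N ⊗ k)/(K + φ(K)) is also nonzero. -/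
/-!
For an `F_p`-subspace `T ⊂ N`, the subspace `A = T ⊗ k` is `φ`-stable, so by the two recurrences
`A ∩ U_m` and its `φ`-image lie in `A ∩ U_{m+1}` and meet in `φ(A ∩ U_{m-1})`. Hence
`m ↦ dim (A ∩ U_m)` is a discretely convex function of `m ∈ [0, 2σ₀]` vanishing at `0`; being
integer valued, once it is positive at `i` it grows by at least one per step, so `A ∩ U_i ≠ 0`
forces `dim T ≥ 1 + 2σ₀ - i`. Take `i = σ₀ + 1` for `K + φ(K)` and `i = σ₀` for `K`; a vector
`v ⊗ 1 ∈ φ(K)` is `φ`-fixed, hence lies in `K`.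
-/

open Module Submodule Function

variable {k : Type*} [Field k] {p : ℕ} [Fact p.Prime] [CharP k p] [PerfectRing k p]
  {V : Type*} [AddCommGroup V] [Module k V]

theorem Nat.add_sub_le_of_convex {f : ℕ → ℕ} {L i : ℕ} (h0 : f 0 = 0)
    (hconv : ∀ m, 0 < m → m < L → 2 * f m ≤ f (m + 1) + f (m - 1)) (hi : i ≤ L)
    (hfi : 0 < f i) : f i + (L - i) ≤ f L := by
  obtain ⟨j, hji, hj⟩ : ∃ j < i, f j < f (j + 1) := by
    by_contra! hdec
    have : ∀ m ≤ i, f m = 0 := by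
      intro m
      induction m with
      | zero => exact fun _ => h0
      | succ m ih => intro hm; have := hdec m (by omega); have := ih (by omega); omega
    have := this i le_rfl
    omega
  have hstep : ∀ m, j ≤ m → m < L → f m < f (m + 1) := by
    intro m hjm
    induction m, hjm using Nat.le_induction with
    | base => exact fun _ => hj
    | succ m hjm ih =>
      intro hm
      have hconvm := hconv (m + 1) (by omega) hm
      rw [Nat.add_sub_cancel] at hconvm
      have := ih (by omega)
      omega
  have hgrow : ∀ m, i ≤ m → m ≤ L → f i + (m - i) ≤ f m := by
    intro m him
    induction m, him using Nat.le_induction with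
    | base => simp
    | succ m him ih =>
      intro hm
      have := hstep m (by omega) (by omega)
      have := ih (by omega)
      omega
  exact hgrow L hi le_rfl

section SemilinearFlag

variable {R : Type*} [DivisionRing R] {σ : R →+* R} [RingHomSurjective σ]
  {M : Type*} [AddCommGroup M] [Module R M]

theorem Submodule.finrank_map_of_injective_s16 (hσ : Bijective σ) {f : M →ₛₗ[σ] M}
    (hf : Injective f) (X : Submodule R M) : finrank R (X.map f) = finrank R X := by
  let e : X ≃+ X.map f :=
    { Equiv.Set.image f X hf with
      map_add' := fun x y => Subtype.ext (map_add f (x : M) y) }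
  have := rank_eq_of_equiv_equiv σ e hσ fun r x => Subtype.ext (map_smulₛₗ f r (x : M))
  rw [finrank, finrank, this]

variable [FiniteDimensional R M]

theorem two_mul_finrank_inf_le (hσ : Bijective σ) {f : M →ₛₗ[σ] M} (hf : Injective f)
    {A Xprev X Xnext : Submodule R M} (hA : A.map f = A) (hnext : X ⊔ X.map f ≤ Xnext)
    (hprev : Xprev.map f = X ⊓ X.map f) :
    2 * finrank R ↥(A ⊓ X) ≤ finrank R ↥(A ⊓ Xnext) + finrank R ↥(A ⊓ Xprev) := by
  have hmap : (A ⊓ X).map f = A ⊓ X.map f := by rw [map_inf f hf, hA]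
  have hsup : A ⊓ X ⊔ (A ⊓ X).map f ≤ A ⊓ Xnext := by
    rw [hmap]
    exact sup_le (inf_le_inf_left A (le_sup_left.trans hnext))
      (inf_le_inf_left A (le_sup_right.trans hnext))
  have hinf : A ⊓ X ⊓ (A ⊓ X).map f = (A ⊓ Xprev).map f := by
    rw [hmap, map_inf f hf, hA, hprev, inf_inf_inf_comm, inf_idem]
  have := finrank_sup_add_finrank_inf_eq (A ⊓ X) ((A ⊓ X).map f)
  rw [hinf, finrank_map_of_injective_s16 hσ hf, finrank_map_of_injective_s16 hσ hf] at this
  have := finrank_mono hsup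
  omega

theorem disjoint_of_finrank_le_of_flag (hσ : Bijective σ) {f : M →ₛₗ[σ] M} (hf : Injective f)
    {U : ℕ → Submodule R M} {L i : ℕ} (hU0 : U 0 = ⊥)
    (hnext : ∀ m, 0 < m → m < L → U (m + 1) = U m ⊔ (U m).map f)
    (hprev : ∀ m, 0 < m → m < L → (U (m - 1)).map f = U m ⊓ (U m).map f)
    {A : Submodule R M} (hA : A.map f = A) (hi : i ≤ L) (hAdim : finrank R A ≤ L - i) :
    Disjoint A (U i) := by
  rw [disjoint_iff, ← finrank_eq_zero]
  by_contra hpos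
  have hconv : ∀ m, 0 < m → m < L →
      2 * finrank R ↥(A ⊓ U m) ≤ finrank R ↥(A ⊓ U (m + 1)) + finrank R ↥(A ⊓ U (m - 1)) :=
    fun m hm hmL => two_mul_finrank_inf_le hσ hf hA (hnext m hm hmL).ge (hprev m hm hmL)
  have := Nat.add_sub_le_of_convex (f := fun m => finrank R ↥(A ⊓ U m)) (by simp [hU0]) hconv hi
    (Nat.pos_of_ne_zero hpos)
  have := finrank_mono (inf_le_left : A ⊓ U L ≤ A)
  omega

end SemilinearFlag

open TensorProduct

variable {p : ℕ} [Fact p.Prime]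
  {k : Type*} [Field k] [IsAlgClosed k] [CharP k p] [Algebra (ZMod p) k]
  {N : Type*} [AddCommGroup N] [Module (ZMod p) N] [FiniteDimensional (ZMod p) N]

/-- The `F_p`-subspace `T ⊂ N` base-changed to `k`, viewed inside `N ⊗_{F_p} k`. -/
def baseChangeSub (T : Submodule (ZMod p) N) : Submodule k (k ⊗[ZMod p] N) :=
  Submodule.span k ((fun v : N => (1 : k) ⊗ₜ[ZMod p] v) '' (T : Set N))

section BaseChange

variable {p : ℕ} [Fact p.Prime] {k : Type*} [Field k] [Algebra (ZMod p) k]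
  {N : Type*} [AddCommGroup N] [Module (ZMod p) N]

theorem baseChangeSub_eq_baseChange (T : Submodule (ZMod p) N) :
    baseChangeSub T = T.baseChange k := by
  rw [baseChange_eq_span, baseChangeSub, map_coe]
  rfl

theorem finrank_baseChangeSub_le [FiniteDimensional (ZMod p) N] (T : Submodule (ZMod p) N) :
    finrank k (baseChangeSub (k := k) T) ≤ finrank (ZMod p) T := by
  rw [baseChangeSub_eq_baseChange, baseChange, ← finrank_baseChange (R := k) (S := ZMod p)]
  exact LinearMap.finrank_range_le _

theorem map_baseChangeSub_of_fixed {σ : k →+* k} [RingHomSurjective σ]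
    {φ : (k ⊗[ZMod p] N) →ₛₗ[σ] (k ⊗[ZMod p] N)} (hφ : ∀ v : N, φ (1 ⊗ₜ v) = 1 ⊗ₜ v)
    (T : Submodule (ZMod p) N) : (baseChangeSub T).map φ = baseChangeSub T := by
  rw [baseChangeSub, map_span, Set.image_image]
  simp only [hφ]

theorem one_tmul_notMem_of_disjoint {v : N} (hv : v ≠ 0) {W : Submodule k (k ⊗[ZMod p] N)}
    (hW : Disjoint (baseChangeSub (span (ZMod p) {v})) W) : (1 : k) ⊗ₜ[ZMod p] v ∉ W := fun hvW =>
  hv <| (Module.FaithfullyFlat.one_tmul_eq_zero_iff (ZMod p) N (A := k) v).mp <|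
    disjoint_def.mp hW _ (subset_span ⟨v, mem_span_singleton_self v, rfl⟩) hvW

end BaseChange

theorem chern_mod_p_injective_general
    (φ : (k ⊗[ZMod p] N) →ₛₗ[frobenius k p] (k ⊗[ZMod p] N))
    (hφbij : Function.Bijective φ)
    (hφ : ∀ (c : k) (v : N), φ (c ⊗ₜ[ZMod p] v) = (c ^ p) ⊗ₜ[ZMod p] v)
    (σ₀ : ℕ) (hσ₀ : 1 ≤ σ₀) (K : Submodule k (k ⊗[ZMod p] N))
    (hflag : ∀ m : ℕ, m ≤ 2 * σ₀ → finrank k ↥(flagU σ₀ φ K m) = m)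
    (hrec1 : ∀ m : ℕ, 0 < m → m < 2 * σ₀ →
      flagU σ₀ φ K (m + 1) = flagU σ₀ φ K m ⊔ Submodule.map φ (flagU σ₀ φ K m))
    (hrec2 : ∀ m : ℕ, 0 < m → m < 2 * σ₀ →
      Submodule.map φ (flagU σ₀ φ K (m - 1)) =
        flagU σ₀ φ K m ⊓ Submodule.map φ (flagU σ₀ φ K m)) :
    (∀ T : Submodule (ZMod p) N, finrank (ZMod p) T < σ₀ →
      Function.Injective (fun t : ↥(baseChangeSub T) =>
        (Submodule.map φ K).mkQ t.1) ∧
      Function.Injective (fun t : ↥(baseChangeSub T) =>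
        (K ⊔ Submodule.map φ K).mkQ t.1)) ∧
    (∀ v : N, v ≠ 0 → (Submodule.map φ K).mkQ ((1 : k) ⊗ₜ[ZMod p] v) ≠ 0) ∧
    (2 ≤ σ₀ → ∀ v : N, v ≠ 0 → (K ⊔ Submodule.map φ K).mkQ ((1 : k) ⊗ₜ[ZMod p] v) ≠ 0) := by
  have hfix (v : N) : φ ((1 : k) ⊗ₜ v) = 1 ⊗ₜ v := by rw [hφ, one_pow]
  have hflag_disjoint {T : Submodule (ZMod p) N} {i : ℕ} (hi : i ≤ 2 * σ₀)
      (hT : finrank (ZMod p) T ≤ 2 * σ₀ - i) : Disjoint (baseChangeSub T) (flagU σ₀ φ K i) :=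
    disjoint_of_finrank_le_of_flag (bijective_frobenius k p) hφbij.injective
      (finrank_eq_zero.mp (hflag 0 (Nat.zero_le _))) hrec1 hrec2
      (map_baseChangeSub_of_fixed hfix T) hi ((finrank_baseChangeSub_le T).trans hT)
  have hK {T : Submodule (ZMod p) N} (hT : finrank (ZMod p) T ≤ σ₀) :
      Disjoint (baseChangeSub T) K :=
    flagU_self σ₀ φ K ▸ hflag_disjoint (by omega) (by omega)
  have hKφK {T : Submodule (ZMod p) N} (hT : finrank (ZMod p) T < σ₀) :
      Disjoint (baseChangeSub T) (K ⊔ K.map φ) :=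
    flagU_succ_self σ₀ φ K ▸ hflag_disjoint (by omega) (by omega)
  refine ⟨fun T hT => ⟨?_, ?_⟩, fun v hv hvφK => ?_, fun h2σ₀ v hv hv' => ?_⟩
  · exact LinearMap.injective_domRestrict_iff (f := (K.map φ).mkQ).mpr
      (by rw [ker_mkQ]; exact (hKφK hT).mono_right le_sup_right)
  · exact LinearMap.injective_domRestrict_iff (f := (K ⊔ K.map φ).mkQ).mpr
      (by rw [ker_mkQ]; exact hKφK hT)
  · obtain ⟨w, hwK, hw⟩ := (Quotient.mk_eq_zero _).mp hvφK
    rw [← hfix v] at hw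
    exact one_tmul_notMem_of_disjoint hv (hK (by rwa [finrank_span_singleton hv]))
      (hφbij.injective hw ▸ hwK)
  · exact one_tmul_notMem_of_disjoint hv
      (hKφK (by rw [finrank_span_singleton hv]; omega)) ((Quotient.mk_eq_zero _).mp hv')

/-- if `dim_{F_p} T < σ₀` then `T ⊗ k → (N ⊗ k)/φ(K)` is injective, and
even the composite `T ⊗ k → (N ⊗ k)/(K + φ(K))` is injective; in particular for every
nonzero `v ∈ N` the image of `v ⊗ 1` in `(N ⊗ k)/φ(K)` is nonzero, and if `σ₀ ≥ 2` its
image in `(N ⊗ k)/(K + φ(K))` is also nonzero. -/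
theorem chern_mod_p_injective
    (φ : (k ⊗[ZMod p] N) →ₛₗ[frobenius k p] (k ⊗[ZMod p] N))
    (hφbij : Function.Bijective φ)
    (hφ : ∀ (c : k) (v : N), φ (c ⊗ₜ[ZMod p] v) = (c ^ p) ⊗ₜ[ZMod p] v)
    (σ₀ : ℕ) (hσ₀ : 1 ≤ σ₀) (K : Submodule k (k ⊗[ZMod p] N))
    (hK : finrank k K = σ₀)
    (hKφ : finrank k ↥(K ⊔ Submodule.map φ K) = σ₀ + 1)
    (hU : finrank k ↥(bigU φ K) = 2 * σ₀)
    (hflag : ∀ m : ℕ, m ≤ 2 * σ₀ → finrank k ↥(flagU σ₀ φ K m) = m)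
    (hrec1 : ∀ m : ℕ, 0 < m → m < 2 * σ₀ →
      flagU σ₀ φ K (m + 1) = flagU σ₀ φ K m ⊔ Submodule.map φ (flagU σ₀ φ K m))
    (hrec2 : ∀ m : ℕ, 0 < m → m < 2 * σ₀ →
      Submodule.map φ (flagU σ₀ φ K (m - 1)) =
        flagU σ₀ φ K m ⊓ Submodule.map φ (flagU σ₀ φ K m)) :
    (∀ T : Submodule (ZMod p) N, finrank (ZMod p) T < σ₀ →
      Function.Injective (fun t : ↥(baseChangeSub T) =>
        (Submodule.map φ K).mkQ t.1) ∧
      Function.Injective (fun t : ↥(baseChangeSub T) =>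
        (K ⊔ Submodule.map φ K).mkQ t.1)) ∧
    (∀ v : N, v ≠ 0 → (Submodule.map φ K).mkQ ((1 : k) ⊗ₜ[ZMod p] v) ≠ 0) ∧
    (2 ≤ σ₀ → ∀ v : N, v ≠ 0 → (K ⊔ Submodule.map φ K).mkQ ((1 : k) ⊗ₜ[ZMod p] v) ≠ 0) :=
  chern_mod_p_injective_general φ hφbij hφ σ₀ hσ₀ K hflag hrec1 hrec2
end
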